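/- arXiv:1503.08881 — 2 statements merged into one kernel-verified Lean document; each statement's English description precedes it below -/
import Mathlib

section
/- Fix a patch i and suppose R0^i(P) > 1. Then the disease persists in patch i: every solution I : [0,∞) → ℝ^n of I'(t) = G(I(t)) with I(0) ∈ Ω and I_i(0) > 0 satisfies liminf_{t→∞} I_i(t) > 0. -/
open Matrix Filter
open Topology

noncomputable section

/-- The spectral radius of a real square matrix: the supremum of the norms of its
complex eigenvalues. -/
def specRad {n : ℕ} (A : Matrix (Fin n) (Fin n) ℝ) : ℝ :=
  sSup {r : ℝ | ∃ μ ∈ spectrum ℂ (A.map (Complex.ofReal)), ‖μ‖ = r}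

/-- Irreducibility of a square matrix: no proper nonempty subset of indices is
invariant, i.e. from every such subset there is a nonzero entry leading outside of it. -/
def MatIrred {n : ℕ} (A : Matrix (Fin n) (Fin n) ℝ) : Prop :=
  ∀ S : Set (Fin n), S.Nonempty → S ≠ Set.univ → ∃ i ∈ S, ∃ j ∈ Sᶜ, A i j ≠ 0

/-- N̄ᵢ = bᵢ/dᵢ, the asymptotic population of patch i. -/
def Nbar {n : ℕ} (b d : Fin n → ℝ) : Fin n → ℝ := fun i => b i / d i

/-- Ñⱼ = ∑ₖ p_{kj} N̄ₖ, the effective population of patch j. -/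
def Ntil {n : ℕ} (P : Matrix (Fin n) (Fin n) ℝ) (b d : Fin n → ℝ) : Fin n → ℝ :=
  fun j => ∑ k, P k j * Nbar b d k

/-- M = P·diag(β)·diag(Ñ)⁻¹·Pᵀ. -/
def Mmat {n : ℕ} (P : Matrix (Fin n) (Fin n) ℝ) (β b d : Fin n → ℝ) :
    Matrix (Fin n) (Fin n) ℝ :=
  P * Matrix.diagonal β * Matrix.diagonal (fun j => (Ntil P b d j)⁻¹) * Pᵀ

/-- F = diag(N̄)·M. -/
def Fmat {n : ℕ} (P : Matrix (Fin n) (Fin n) ℝ) (β b d : Fin n → ℝ) :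
    Matrix (Fin n) (Fin n) ℝ :=
  Matrix.diagonal (Nbar b d) * Mmat P β b d

/-- V = −diag(dᵢ + γᵢ). -/
def Vmat {n : ℕ} (d γ : Fin n → ℝ) : Matrix (Fin n) (Fin n) ℝ :=
  -Matrix.diagonal (fun i => d i + γ i)

/-- The SIS vector field G(I) = diag(N̄ − I)·M·I + V·I, written componentwise. -/
def Gfield {n : ℕ} (P : Matrix (Fin n) (Fin n) ℝ) (β b d γ : Fin n → ℝ)
    (I : Fin n → ℝ) : Fin n → ℝ :=
  fun i => (Nbar b d i - I i) * (Mmat P β b d).mulVec I i - (d i + γ i) * I i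

/-- Ω = {I : 0 ≤ Iᵢ ≤ N̄ᵢ for all i}. -/
def OmegaSet {n : ℕ} (b d : Fin n → ℝ) : Set (Fin n → ℝ) :=
  {I | ∀ i, 0 ≤ I i ∧ I i ≤ Nbar b d i}

/-- The basic reproduction number R₀ = ρ(−F·V⁻¹). -/
def R0 {n : ℕ} (P : Matrix (Fin n) (Fin n) ℝ) (β b d γ : Fin n → ℝ) : ℝ :=
  specRad (-(Fmat P β b d * (Vmat d γ)⁻¹))

/-- `I : ℝ → ℝⁿ` is a solution of the SIS system on [0,∞). -/
def IsSol {n : ℕ} (P : Matrix (Fin n) (Fin n) ℝ) (β b d γ : Fin n → ℝ)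
    (I : ℝ → Fin n → ℝ) : Prop :=
  ∀ t ∈ Set.Ici (0 : ℝ), HasDerivWithinAt I (Gfield P β b d γ (I t)) (Set.Ici 0) t

/-- The Jacobian matrix DX(I) = diag(N̄ − I)·M + V − diag(M·I) of the SIS vector field. -/
def DXmat {n : ℕ} (P : Matrix (Fin n) (Fin n) ℝ) (β b d γ : Fin n → ℝ)
    (I : Fin n → ℝ) : Matrix (Fin n) (Fin n) ℝ :=
  Matrix.diagonal (fun i => Nbar b d i - I i) * Mmat P β b d + Vmat d γ -
    Matrix.diagonal ((Mmat P β b d).mulVec I)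

/-- The isolated-patch reproduction number R₀ⁱ = βᵢ/(dᵢ + γᵢ). -/
def R0i {n : ℕ} (β d γ : Fin n → ℝ) (i : Fin n) : ℝ := β i / (d i + γ i)

/-- The patch reproduction number R₀ⁱ(P) = (∑ⱼ βⱼ p_{ij}² N̄ᵢ / Ñⱼ)/(dᵢ + γᵢ). -/
def R0iP {n : ℕ} (P : Matrix (Fin n) (Fin n) ℝ) (β b d γ : Fin n → ℝ) (i : Fin n) : ℝ :=
  (∑ j, β j * (P i j) ^ 2 * Nbar b d i / Ntil P b d j) / (d i + γ i)

/-- Condition H for patch i: whenever p_{ij} > 0, no other patch k ≠ i visits patch j. -/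
def CondH {n : ℕ} (P : Matrix (Fin n) (Fin n) ℝ) (i : Fin n) : Prop :=
  ∀ j, 0 < P i j → ∀ k, k ≠ i → P k j = 0

lemma barrier {ι : Type*} [Fintype ι] {T : ℝ} {g g' : ℝ → ι → ℝ}
    (hg : ∀ j, ∀ t ∈ Set.Ici (0:ℝ), HasDerivWithinAt (fun s => g s j) (g' t j) (Set.Ici 0) t)
    (h0 : ∀ j, 0 ≤ g 0 j)
    (key : ∀ t, 0 ≤ t → t ≤ T → ∀ j, g t j = 0 → (∀ k, 0 ≤ g t k) → 0 < g' t j) :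
    ∀ t, 0 ≤ t → t ≤ T → ∀ j, 0 ≤ g t j := by
  by_contra hcon
  push_neg at hcon
  obtain ⟨t₁, ht₁0, ht₁T, j₁, hj₁⟩ := hcon
  set S : ι → Set ℝ := fun j => {t | 0 ≤ t ∧ t ≤ T ∧ g t j < 0} with hSdef
  have ht₁S : t₁ ∈ ⋃ j, S j := Set.mem_iUnion.2 ⟨j₁, ht₁0, ht₁T, hj₁⟩
  have hSne : (⋃ j, S j).Nonempty := ⟨t₁, ht₁S⟩
  have hbdd : BddBelow (⋃ j, S j) := ⟨0, fun t ht => (Set.mem_iUnion.1 ht).choose_spec.1⟩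
  set τ := sInf (⋃ j, S j) with hτdef
  have hτ0 : 0 ≤ τ := le_csInf hSne (fun t ht => (Set.mem_iUnion.1 ht).choose_spec.1)
  have hτT : τ ≤ T := le_trans (csInf_le hbdd ht₁S) ht₁T
  have hcont : ∀ j, ContinuousOn (fun s => g s j) (Set.Ici 0) :=
    fun j t ht => (hg j t ht).continuousWithinAt
  -- before τ all coordinates are nonnegative
  have hbefore : ∀ s, 0 ≤ s → s < τ → ∀ k, 0 ≤ g s k := by
    intro s hs hsτ k
    by_contra h
    push_neg at h
    have hmem : s ∈ ⋃ j, S j :=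
      Set.mem_iUnion.2 ⟨k, hs, le_trans hsτ.le hτT, h⟩
    exact absurd (csInf_le hbdd hmem) (not_le.2 hsτ)
  -- at τ all coordinates are nonnegative
  have hτnn : ∀ k, 0 ≤ g τ k := by
    intro k
    rcases eq_or_lt_of_le hτ0 with h | h
    · exact h ▸ h0 k
    · have hne : (𝓝[Set.Ioo 0 τ] τ).NeBot := right_nhdsWithin_Ioo_neBot h
      have htend : Tendsto (fun s => g s k) (𝓝[Set.Ioo 0 τ] τ) (𝓝 (g τ k)) :=
        ((hcont k τ hτ0).mono (fun s hs => le_of_lt hs.1))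
      exact ge_of_tendsto htend (eventually_nhdsWithin_of_forall
        (fun s hs => hbefore s hs.1.le hs.2 k))
  -- τ is in the closure of some S j
  have hτcl : τ ∈ closure (⋃ j, S j) := csInf_mem_closure hSne hbdd
  rw [closure_iUnion_of_finite] at hτcl
  obtain ⟨j, hjcl⟩ := Set.mem_iUnion.1 hτcl
  have hjne : (𝓝[S j] τ).NeBot := mem_closure_iff_nhdsWithin_neBot.1 hjcl
  have hSsub : S j ⊆ Set.Ici 0 := fun t ht => ht.1
  -- g τ j ≤ 0, hence = 0
  have hgτj : g τ j = 0 := by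
    have htend : Tendsto (fun s => g s j) (𝓝[S j] τ) (𝓝 (g τ j)) :=
      ((hcont j τ hτ0).mono hSsub)
    have hle : g τ j ≤ 0 :=
      le_of_tendsto htend (eventually_nhdsWithin_of_forall (fun s hs => hs.2.2.le))
    exact le_antisymm hle (hτnn j)
  have hd : 0 < g' τ j := key τ hτ0 hτT j hgτj hτnn
  -- τ not in S j
  have hτnotS : τ ∉ S j := fun h => absurd hgτj (ne_of_lt h.2.2)
  have hSsub' : S j ⊆ Set.Ici 0 \ {τ} := fun t ht =>
    ⟨ht.1, fun h => hτnotS (h ▸ ht)⟩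
  have hslope : Tendsto (slope (fun s => g s j) τ) (𝓝[S j] τ) (𝓝 (g' τ j)) :=
    (hasDerivWithinAt_iff_tendsto_slope.1 (hg j τ hτ0)).mono_left
      (nhdsWithin_mono τ hSsub')
  have hev : ∀ᶠ t in 𝓝[S j] τ, 0 < slope (fun s => g s j) τ t :=
    hslope.eventually (eventually_gt_nhds hd)
  obtain ⟨t, hts, htS⟩ := (hev.and (eventually_mem_nhdsWithin)).exists
  -- slope positive, g t j < 0 = g τ j ⇒ t < τ
  have hnum : g t j - g τ j < 0 := by rw [hgτj]; simpa using htS.2.2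
  have htτ : t < τ := by
    by_contra hge
    push_neg at hge
    have hne : t ≠ τ := fun h => hτnotS (h ▸ htS)
    have : slope (fun s => g s j) τ t < 0 := by
      rw [slope_def_field]
      exact div_neg_of_neg_of_pos hnum (by rw [sub_pos]; exact lt_of_le_of_ne hge (Ne.symm hne))
    exact absurd hts (not_lt.2 this.le)
  exact absurd (csInf_le hbdd (Set.mem_iUnion.2 ⟨j, htS⟩)) (not_le.2 htτ)

lemma Mmat_apply {n : ℕ} (P : Matrix (Fin n) (Fin n) ℝ) (β b d : Fin n → ℝ) (j k : Fin n) :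
    Mmat P β b d j k = ∑ l, P j l * β l * (Ntil P b d l)⁻¹ * P k l := by
  rw [Mmat, Matrix.mul_apply]
  simp only [Matrix.mul_diagonal, Matrix.transpose_apply]

/-- if R₀ⁱ(P) > 1 then the disease persists in patch i: every solution
starting in Ω with Iᵢ(0) > 0 satisfies liminf_{t→∞} Iᵢ(t) > 0. -/
theorem sis_patch_persistence
    {n : ℕ} (hn : 1 ≤ n) (b d γ β : Fin n → ℝ) (P : Matrix (Fin n) (Fin n) ℝ)
    (hb : ∀ i, 0 < b i) (hd : ∀ i, 0 < d i) (hγ : ∀ i, 0 ≤ γ i) (hβ : ∀ j, 0 < β j)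
    (hP0 : ∀ i j, 0 ≤ P i j) (hP1 : ∀ i j, P i j ≤ 1)
    (hrow : ∀ i, ∑ j, P i j = 1) (hcol : ∀ j, ∃ k, 0 < P k j)
    (i : Fin n) (hRi : 1 < R0iP P β b d γ i) :
    ∀ I : ℝ → Fin n → ℝ, IsSol P β b d γ I → I 0 ∈ OmegaSet b d → 0 < I 0 i →
      0 < Filter.liminf (fun t => I t i) Filter.atTop := by
  intro I hI hΩ hIi0
  classical
  have hNbar : ∀ k, 0 < Nbar b d k := fun k => div_pos (hb k) (hd k)
  have hNtil : ∀ j, 0 < Ntil P b d j := by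
    intro j
    obtain ⟨k, hk⟩ := hcol j
    exact Finset.sum_pos' (fun l _ => mul_nonneg (hP0 l j) (hNbar l).le)
      ⟨k, Finset.mem_univ k, mul_pos hk (hNbar k)⟩
  have hMnn : ∀ j k, 0 ≤ Mmat P β b d j k := by
    intro j k
    rw [Mmat_apply]
    exact Finset.sum_nonneg fun l _ => mul_nonneg (mul_nonneg (mul_nonneg (hP0 j l)
      (hβ l).le) (inv_nonneg.2 (hNtil l).le)) (hP0 k l)
  have ha : ∀ j, 0 < d j + γ j := fun j => add_pos_of_pos_of_nonneg (hd j) (hγ j)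
  -- componentwise derivative
  have hderiv : ∀ t ∈ Set.Ici (0:ℝ), ∀ j,
      HasDerivWithinAt (fun s => I s j) (Gfield P β b d γ (I t) j) (Set.Ici 0) t :=
    fun t ht => hasDerivWithinAt_pi.1 (hI t ht)
  ------------------------------------------------------------------
  -- Step A : upper bound I t j ≤ Nbar j
  ------------------------------------------------------------------
  have hA : ∀ t, 0 ≤ t → ∀ j, I t j ≤ Nbar b d j := by
    intro t₀ ht₀ j
    have := barrier (T := t₀) (g := fun s j => Nbar b d j - I s j)
      (g' := fun s j => -(Gfield P β b d γ (I s) j))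
      (fun j t ht => (hderiv t ht j).const_sub (Nbar b d j))
      (fun j => sub_nonneg.2 (hΩ j).2) ?_ t₀ ht₀ le_rfl j
    · linarith [this]
    · intro t ht0 htT j hgt _
      have hx : I t j = Nbar b d j := by
        have : Nbar b d j - I t j = 0 := hgt
        linarith
      have hG : Gfield P β b d γ (I t) j = -((d j + γ j) * Nbar b d j) := by
        simp [Gfield, hx]
      show 0 < -Gfield P β b d γ (I t) j
      rw [hG, neg_neg]
      exact mul_pos (ha j) (hNbar j)
  ------------------------------------------------------------------
  -- Step B : nonnegativity 0 ≤ I t j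
  ------------------------------------------------------------------
  obtain ⟨R, hRdef⟩ : ∃ R : Fin n → ℝ, R = fun j => ∑ k, Mmat P β b d j k := ⟨_, rfl⟩
  have hRnn : ∀ j, 0 ≤ R j := fun j => by
    rw [hRdef]; exact Finset.sum_nonneg fun k _ => hMnn j k
  obtain ⟨Λ, hΛdef⟩ : ∃ Λ : ℝ, Λ = 1 + ∑ j, (Nbar b d j + 1) * R j := ⟨_, rfl⟩
  have hΛterm : ∀ j, (Nbar b d j + 1) * R j + 1 ≤ Λ := by
    intro j
    have h1 : (Nbar b d j + 1) * R j ≤ ∑ j', (Nbar b d j' + 1) * R j' :=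
      Finset.single_le_sum (f := fun j' => (Nbar b d j' + 1) * R j')
        (fun j' _ => mul_nonneg (by linarith [hNbar j']) (hRnn j')) (Finset.mem_univ j)
    rw [hΛdef]; linarith
  have hΛ0 : 0 < Λ := by
    have h1 := hΛterm ⟨0, hn⟩
    have h2 : 0 ≤ (Nbar b d ⟨0, hn⟩ + 1) * R ⟨0, hn⟩ :=
      mul_nonneg (by linarith [hNbar (⟨0, hn⟩ : Fin n)]) (hRnn ⟨0, hn⟩)
    linarith
  have hB : ∀ t, 0 ≤ t → ∀ j, 0 ≤ I t j := by
    intro t₀ ht₀ j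
    refine le_of_forall_pos_le_add ?_
    intro δ hδ
    obtain ⟨ε, hεdef⟩ : ∃ ε : ℝ,
        ε = min (Real.exp (-(Λ * t₀))) (δ * Real.exp (-(Λ * t₀))) := ⟨_, rfl⟩
    have hε0 : 0 < ε := hεdef ▸ lt_min (Real.exp_pos _) (mul_pos hδ (Real.exp_pos _))
    have hεe : ε ≤ Real.exp (-(Λ * t₀)) := hεdef ▸ min_le_left _ _
    have hεδ : ε * Real.exp (Λ * t₀) ≤ δ := by
      calc ε * Real.exp (Λ * t₀) ≤ δ * Real.exp (-(Λ * t₀)) * Real.exp (Λ * t₀) :=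
            mul_le_mul_of_nonneg_right (hεdef ▸ min_le_right _ _) (Real.exp_pos _).le
        _ = δ := by rw [mul_assoc, ← Real.exp_add, neg_add_cancel, Real.exp_zero, mul_one]
    have hbar := barrier (T := t₀) (g := fun s k => I s k + ε * Real.exp (Λ * s))
      (g' := fun s k => Gfield P β b d γ (I s) k + ε * (Real.exp (Λ * s) * Λ)) ?_ ?_ ?_
      t₀ ht₀ le_rfl j
    · have hbar' : 0 ≤ I t₀ j + ε * Real.exp (Λ * t₀) := hbar
      linarith [hbar', hεδ]
    · intro k t ht
      have h1 : HasDerivAt (fun s : ℝ => Λ * s) Λ t := by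
        simpa using (hasDerivAt_id t).const_mul Λ
      exact (hderiv t ht k).add ((h1.exp.const_mul ε).hasDerivWithinAt)
    · intro k
      have h2 : (0:ℝ) < ε * Real.exp (Λ * 0) := mul_pos hε0 (Real.exp_pos _)
      show (0:ℝ) ≤ I 0 k + ε * Real.exp (Λ * 0)
      linarith [(hΩ k).1]
    · intro t ht0 htT k hgt hge
      obtain ⟨E, hEdef⟩ : ∃ E : ℝ, E = ε * Real.exp (Λ * t) := ⟨_, rfl⟩
      have hE0 : 0 < E := hEdef ▸ mul_pos hε0 (Real.exp_pos _)
      have hE1 : E ≤ 1 := by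
        rw [hEdef]
        calc ε * Real.exp (Λ * t) ≤ Real.exp (-(Λ * t₀)) * Real.exp (Λ * t) :=
              mul_le_mul_of_nonneg_right hεe (Real.exp_pos _).le
          _ = Real.exp (-(Λ * t₀) + Λ * t) := by rw [← Real.exp_add]
          _ ≤ 1 := by
              rw [Real.exp_le_one_iff]
              have h9 := mul_le_mul_of_nonneg_left htT hΛ0.le
              linarith
      have hIk : I t k = -E := by
        have h9 : I t k + ε * Real.exp (Λ * t) = 0 := hgt
        rw [hEdef]; linarith
      have hIall : ∀ l, -E ≤ I t l := fun l => by
        have h9 : 0 ≤ I t l + ε * Real.exp (Λ * t) := hge l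
        rw [hEdef]; linarith
      have hmv : -(R k * E) ≤ (Mmat P β b d).mulVec (I t) k := by
        have h1 : ∑ l, Mmat P β b d k l * (-E) ≤ ∑ l, Mmat P β b d k l * I t l :=
          Finset.sum_le_sum fun l _ => mul_le_mul_of_nonneg_left (hIall l) (hMnn k l)
        have h2 : ∑ l, Mmat P β b d k l * (-E) = -(R k * E) := by
          rw [← Finset.sum_mul]; simp only [hRdef]; ring
        rw [Matrix.mulVec, dotProduct]
        calc -(R k * E) = ∑ l, Mmat P β b d k l * (-E) := h2.symm
          _ ≤ ∑ l, Mmat P β b d k l * I t l := h1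
      -- main estimate
      show 0 < (Nbar b d k - I t k) * (Mmat P β b d).mulVec (I t) k
          - (d k + γ k) * I t k + ε * (Real.exp (Λ * t) * Λ)
      have hεΛ : ε * (Real.exp (Λ * t) * Λ) = Λ * E := by rw [hEdef]; ring
      have hNE : 0 < Nbar b d k + E := by linarith [hNbar k]
      have h3 : (Nbar b d k + E) * (-(R k * E)) ≤
          (Nbar b d k + E) * (Mmat P β b d).mulVec (I t) k :=
        mul_le_mul_of_nonneg_left hmv hNE.le
      have h4 : (Nbar b d k + E) * (R k * E) ≤ (Nbar b d k + 1) * R k * E := by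
        have : (Nbar b d k + E) * (R k * E) ≤ (Nbar b d k + 1) * (R k * E) :=
          mul_le_mul_of_nonneg_right (by linarith) (mul_nonneg (hRnn k) hE0.le)
        linarith [this, mul_assoc (Nbar b d k + 1) (R k) E]
      have h5 : ((Nbar b d k + 1) * R k + 1) * E ≤ Λ * E :=
        mul_le_mul_of_nonneg_right (hΛterm k) hE0.le
      rw [hIk, hεΛ]
      have h6 := mul_pos (ha k) hE0
      nlinarith [h3, h4, h5, h6]
  ------------------------------------------------------------------
  -- Step C : persistence
  ------------------------------------------------------------------
  have hamain : d i + γ i < ∑ j, β j * P i j ^ 2 * Nbar b d i / Ntil P b d j := by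
    rw [R0iP, lt_div_iff₀ (ha i)] at hRi
    linarith
  have hNc : ∑ j, β j * P i j ^ 2 * Nbar b d i / Ntil P b d j
      = Nbar b d i * Mmat P β b d i i := by
    rw [Mmat_apply, Finset.mul_sum]
    refine Finset.sum_congr rfl fun l _ => ?_
    rw [div_eq_mul_inv]; ring
  obtain ⟨c, hcdef⟩ : ∃ c : ℝ, c = Mmat P β b d i i := ⟨_, rfl⟩
  have hac : d i + γ i < Nbar b d i * c := by rw [hcdef, ← hNc]; exact hamain
  have hc0 : 0 < c := by nlinarith [hNbar i, ha i]
  obtain ⟨K, hKdef⟩ : ∃ K : ℝ, K = Nbar b d i - (d i + γ i) / c := ⟨_, rfl⟩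
  have hK0 : 0 < K := by
    rw [hKdef, sub_pos, div_lt_iff₀ hc0]
    linarith [hac]
  obtain ⟨m, hmdef⟩ : ∃ m : ℝ, m = min (I 0 i) K := ⟨_, rfl⟩
  have hm0 : 0 < m := hmdef ▸ lt_min hIi0 hK0
  have hmK : m ≤ K := hmdef ▸ min_le_right _ _
  have hC : ∀ t, 0 ≤ t → m / 2 ≤ I t i := by
    intro t₀ ht₀
    have hbar := barrier (T := t₀) (ι := Unit) (g := fun s _ => I s i - m / 2)
      (g' := fun s _ => Gfield P β b d γ (I s) i) ?_ ?_ ?_ t₀ ht₀ le_rfl ()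
    · linarith [hbar]
    · intro _ t ht
      exact (hderiv t ht i).sub_const _
    · intro _
      have h9 : m ≤ I 0 i := hmdef ▸ min_le_left _ _
      show (0:ℝ) ≤ I 0 i - m / 2
      linarith
    · intro t ht0 htT _ hgt _
      have hx : I t i = m / 2 := by
        have h9 : I t i - m / 2 = 0 := hgt
        linarith
      have hmv : c * (m / 2) ≤ (Mmat P β b d).mulVec (I t) i := by
        rw [Matrix.mulVec, dotProduct]
        have h1 : Mmat P β b d i i * I t i ≤ ∑ l, Mmat P β b d i l * I t l :=
          Finset.single_le_sum (f := fun l => Mmat P β b d i l * I t l)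
            (fun l _ => mul_nonneg (hMnn i l) (hB t ht0 l)) (Finset.mem_univ i)
        rw [hx, ← hcdef] at h1
        exact h1
      have hxN : I t i ≤ Nbar b d i := hA t ht0 i
      show 0 < (Nbar b d i - I t i) * (Mmat P β b d).mulVec (I t) i - (d i + γ i) * I t i
      have h3 : (Nbar b d i - I t i) * (c * (m / 2)) ≤
          (Nbar b d i - I t i) * (Mmat P β b d).mulVec (I t) i :=
        mul_le_mul_of_nonneg_left hmv (by linarith)
      have h5 : (d i + γ i) / c * c = d i + γ i := div_mul_cancel₀ _ hc0.ne'
      rw [hx]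
      -- K = Nbar - a/c, m ≤ K, so Nbar - m/2 ≥ a/c + m/2 ; multiply by c m/2
      have h6 : (d i + γ i) / c + m / 2 ≤ Nbar b d i - m / 2 := by
        have : m ≤ Nbar b d i - (d i + γ i) / c := by rw [← hKdef]; exact hmK
        linarith
      rw [hx] at h3
      nlinarith [h3, h6, hc0, hm0, mul_pos hc0 hm0]
  ------------------------------------------------------------------
  -- conclusion via liminf
  ------------------------------------------------------------------
  have hub : IsBoundedUnder (· ≤ ·) atTop (fun t => I t i) := by
    refine isBoundedUnder_of_eventually_le (a := Nbar b d i) ?_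
    filter_upwards [eventually_ge_atTop (0:ℝ)] with t ht
    exact hA t ht i
  have hlow : ∀ᶠ t in (atTop : Filter ℝ), m / 2 ≤ I t i := by
    filter_upwards [eventually_ge_atTop (0:ℝ)] with t ht
    exact hC t ht
  have := le_liminf_of_le hub.isCoboundedUnder_ge hlow
  linarith [this, hm0]
end
end

section
/- The compact set Ω = {I ∈ ℝ^n : 0 ≤ I_i ≤ N̄_i for all i} is positively invariant for the SIS system: every solution I : [0,∞) → ℝ^n of I'(t) = G(I(t)) with I(0) ∈ Ω satisfies I(t) ∈ Ω for all t ≥ 0. -/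
/-!
Ω is the box `Icc 0 N̄`, and `G` points weakly into it on every face: where `I i = 0`,
`G I i = N̄ i * (M I) i ≥ 0` because `M` is entrywise nonnegative, and where `I i = N̄ i`,
`G I i = -(d i + γ i) * N̄ i ≤ 0`. Let `u t` be the sup-norm distance from `I t` to the box,
attained at the coordinatewise clamp `c t` of `I t`. Since the Euler step `c t + h • G (c t)` stays
in the box for small `h ≥ 0` and `G` is Lipschitz near the trajectory, `D⁺u ≤ L u`; Grönwall's
inequality with `u 0 = 0` gives `u ≡ 0`.
-/

open Matrix Filter

noncomputable section

open Set Topology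

section Invariance

variable {E : Type*} [NormedAddCommGroup E] [NormedSpace ℝ E]

lemma eventually_norm_sub_retract_le {f : E → E} {K : Set E} {r : E → E}
    (hr : ∀ z, ∀ y ∈ K, ‖z - r z‖ ≤ ‖z - y‖)
    {x : ℝ → E} {s : ℝ} (htan : ∀ᶠ h in 𝓝[≥] (0 : ℝ), r (x s) + h • f (r (x s)) ∈ K)
    (hx : HasDerivWithinAt x (f (x s)) (Ici s) s) {ε : ℝ} (hε : 0 < ε) :
    ∀ᶠ z in 𝓝[>] s, ‖x z - r (x z)‖ ≤
      ‖x s - r (x s)‖ + (z - s) * (‖f (x s) - f (r (x s))‖ + ε) := by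
  set y := r (x s)
  have hshift : Tendsto (fun z => z - s) (𝓝[>] s) (𝓝[≥] 0) := by
    refine tendsto_nhdsWithin_of_tendsto_nhds_of_eventually_within _ ?_ ?_
    · exact tendsto_sub_nhds_zero_iff.mpr (tendsto_id.mono_left nhdsWithin_le_nhds)
    · filter_upwards [self_mem_nhdsWithin] with z (hz : s < z)
      exact sub_nonneg.mpr hz.le
  have hlin : ∀ᶠ z in 𝓝[>] s, ‖x z - x s - (z - s) • f (x s)‖ ≤ ε * ‖z - s‖ :=
    (hasDerivWithinAt_iff_isLittleO.mp hx).def hε |>.filter_mono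
      (nhdsWithin_mono s Ioi_subset_Ici_self)
  filter_upwards [hshift.eventually htan, hlin, self_mem_nhdsWithin]
    with z hzK hzlin (hz : s < z)
  have hzs : 0 ≤ z - s := sub_nonneg.mpr hz.le
  rw [Real.norm_of_nonneg hzs] at hzlin
  calc ‖x z - r (x z)‖ ≤ ‖x z - (y + (z - s) • f y)‖ := hr _ _ hzK
    _ = ‖(x z - x s - (z - s) • f (x s)) + (x s - y) + (z - s) • (f (x s) - f y)‖ := by
        rw [smul_sub]; abel_nf
    _ ≤ ‖x z - x s - (z - s) • f (x s)‖ + ‖x s - y‖ + ‖(z - s) • (f (x s) - f y)‖ :=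
        norm_add₃_le
    _ ≤ ε * (z - s) + ‖x s - y‖ + (z - s) * ‖f (x s) - f y‖ := by
        rw [norm_smul, Real.norm_of_nonneg hzs]; gcongr
    _ = ‖x s - y‖ + (z - s) * (‖f (x s) - f y‖ + ε) := by ring

theorem mem_of_hasDerivWithinAt_of_subtangent {f : E → E} {K : Set E} {r : E → E}
    (hf : LocallyLipschitz f) (hr_cont : Continuous r) (hrK : ∀ z, r z ∈ K)
    (hr : ∀ z, ∀ y ∈ K, ‖z - r z‖ ≤ ‖z - y‖)
    (htan : ∀ y ∈ K, ∀ᶠ h in 𝓝[≥] (0 : ℝ), y + h • f y ∈ K)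
    {x : ℝ → E} {a b : ℝ} (hx : ContinuousOn x (Icc a b))
    (hx' : ∀ s ∈ Ico a b, HasDerivWithinAt x (f (x s)) (Ici s) s) (ha : x a ∈ K) :
    ∀ s ∈ Icc a b, x s ∈ K := by
  set u : ℝ → ℝ := fun s => ‖x s - r (x s)‖
  have hcpt : IsCompact (x '' Icc a b ∪ r '' (x '' Icc a b)) :=
    have h := isCompact_Icc.image_of_continuousOn hx
    h.union (h.image hr_cont)
  obtain ⟨L, hL⟩ := hf.locallyLipschitzOn.exists_lipschitzOnWith_of_compact hcpt
  have hLu : ∀ s ∈ Icc a b, ‖f (x s) - f (r (x s))‖ ≤ L * u s := fun s hs =>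
    hL.norm_sub_le (Or.inl (mem_image_of_mem x hs))
      (Or.inr (mem_image_of_mem r (mem_image_of_mem x hs)))
  have hu : ContinuousOn u (Icc a b) := (hx.sub (hr_cont.comp_continuousOn hx)).norm
  have hua : u a ≤ 0 := (hr (x a) (x a) ha).trans_eq (by simp)
  have hslope : ∀ s ∈ Ico a b, ∀ ρ, L * u s < ρ →
      ∃ᶠ z in 𝓝[>] s, (z - s)⁻¹ * (u z - u s) < ρ := by
    intro s hs ρ hρ
    refine Eventually.frequently ?_
    filter_upwards [eventually_norm_sub_retract_le hr (htan _ (hrK _)) (hx' s hs)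
      (half_pos (sub_pos.mpr hρ)), self_mem_nhdsWithin] with z hz (hsz : s < z)
    have hzs : 0 < z - s := sub_pos.mpr hsz
    rw [inv_mul_lt_iff₀ hzs]
    nlinarith [hLu s (Ico_subset_Icc_self hs)]
  intro s hs
  have hus : u s ≤ 0 := by
    simpa only [gronwallBound_ε0_δ0] using le_gronwallBound_of_liminf_deriv_right_le hu hslope
      hua (fun _ _ => (add_zero _).ge) s hs
  have hfix : x s = r (x s) := sub_eq_zero.mp (norm_le_zero_iff.mp hus)
  exact hfix ▸ hrK (x s)

end Invariance

section Box

lemma eventually_le_add_mul {a y v : ℝ} (hay : a ≤ y) (hv : y = a → 0 ≤ v) :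
    ∀ᶠ h in 𝓝[≥] (0 : ℝ), a ≤ y + h * v := by
  rcases hay.eq_or_lt with rfl | hlt
  · filter_upwards [self_mem_nhdsWithin] with h (hh : 0 ≤ h)
    exact le_add_of_nonneg_right (mul_nonneg hh (hv rfl))
  · have hcont : Tendsto (fun h : ℝ => y + h * v) (𝓝[≥] 0) (𝓝 y) :=
      tendsto_nhdsWithin_of_tendsto_nhds (Continuous.tendsto' (by fun_prop) 0 y (by simp))
    exact (hcont.eventually (lt_mem_nhds hlt)).mono fun _ h => h.le

lemma eventually_add_mul_mem_Icc {a b y v : ℝ} (hy : y ∈ Icc a b) (hva : y = a → 0 ≤ v)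
    (hvb : y = b → v ≤ 0) : ∀ᶠ h in 𝓝[≥] (0 : ℝ), y + h * v ∈ Icc a b := by
  have hupper := eventually_le_add_mul (neg_le_neg hy.2) (v := -v)
    (fun h => neg_nonneg.mpr (hvb (neg_inj.mp h)))
  filter_upwards [eventually_le_add_mul hy.1 hva, hupper] with h hlo hhi
  exact ⟨hlo, by linarith⟩

variable {ι : Type*} [Fintype ι]

lemma eventually_add_smul_mem_Icc {lo hi y v : ι → ℝ} (hy : y ∈ Icc lo hi)
    (hlo : ∀ i, y i = lo i → 0 ≤ v i) (hhi : ∀ i, y i = hi i → v i ≤ 0) :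
    ∀ᶠ h in 𝓝[≥] (0 : ℝ), y + h • v ∈ Icc lo hi := by
  simp only [← pi_univ_Icc, mem_univ_pi, Pi.add_apply, Pi.smul_apply, smul_eq_mul]
  rw [← pi_univ_Icc, mem_univ_pi] at hy
  exact eventually_all.mpr fun i => eventually_add_mul_mem_Icc (hy i) (hlo i) (hhi i)

lemma abs_sub_max_min_le {lo hi x y : ℝ} (hlo : lo ≤ y) (hhi : y ≤ hi) :
    |x - max lo (min x hi)| ≤ |x - y| := by
  rcases le_total x lo with h | h
  · rw [min_eq_left (h.trans (hlo.trans hhi)), max_eq_left h, abs_of_nonpos (by linarith),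
      abs_of_nonpos (by linarith)]
    linarith
  rcases le_total x hi with h' | h'
  · simp [min_eq_left h', max_eq_right h]
  · rw [min_eq_right h', max_eq_right (hlo.trans hhi), abs_of_nonneg (by linarith),
      abs_of_nonneg (by linarith)]
    linarith

lemma norm_sub_sup_inf_le {lo hi y : ι → ℝ} (hy : y ∈ Icc lo hi) (x : ι → ℝ) :
    ‖x - lo ⊔ x ⊓ hi‖ ≤ ‖x - y‖ := by
  refine (pi_norm_le_iff_of_nonneg (norm_nonneg _)).mpr fun i => ?_
  exact (abs_sub_max_min_le (hy.1 i) (hy.2 i)).trans (norm_le_pi_norm (x - y) i)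

theorem mem_Icc_of_hasDerivWithinAt {f : (ι → ℝ) → ι → ℝ} {lo hi : ι → ℝ}
    (hf : LocallyLipschitz f) (hflo : ∀ y ∈ Icc lo hi, ∀ i, y i = lo i → 0 ≤ f y i)
    (hfhi : ∀ y ∈ Icc lo hi, ∀ i, y i = hi i → f y i ≤ 0)
    {x : ℝ → ι → ℝ} {a b : ℝ} (hx : ContinuousOn x (Icc a b))
    (hx' : ∀ s ∈ Ico a b, HasDerivWithinAt x (f (x s)) (Ici s) s) (ha : x a ∈ Icc lo hi) :
    ∀ s ∈ Icc a b, x s ∈ Icc lo hi := by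
  have hlohi : lo ≤ hi := ha.1.trans ha.2
  refine mem_of_hasDerivWithinAt_of_subtangent (r := fun z => lo ⊔ z ⊓ hi) hf
    (continuous_pi fun i => continuous_const.max ((continuous_apply i).min continuous_const))
    (fun z => show lo ⊔ z ⊓ hi ∈ Icc lo hi from ⟨le_sup_left, sup_le hlohi inf_le_right⟩)
    (fun z y hy => norm_sub_sup_inf_le hy z)
    (fun y hy => eventually_add_smul_mem_Icc hy (hflo y hy) (hfhi y hy)) hx hx' ha

end Box

section SIS

variable {n : ℕ} {P : Matrix (Fin n) (Fin n) ℝ} {β b d γ : Fin n → ℝ}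

lemma OmegaSet_eq_Icc : OmegaSet b d = Icc 0 (Nbar b d) := by
  ext I
  simp only [OmegaSet, mem_Icc, Pi.le_def, Pi.zero_apply, forall_and]
  rfl

lemma Mmat_nonneg (hP : ∀ i j, 0 ≤ P i j) (hβ : ∀ j, 0 ≤ β j) (hN : 0 ≤ Nbar b d) (i j : Fin n) :
    0 ≤ Mmat P β b d i j := by
  have hNtil : ∀ k, 0 ≤ Ntil P b d k := fun k =>
    Finset.sum_nonneg fun l _ => mul_nonneg (hP l k) (hN l)
  rw [Mmat, Matrix.mul_apply]
  simp only [Matrix.mul_diagonal, Matrix.transpose_apply]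
  exact Finset.sum_nonneg fun k _ =>
    mul_nonneg (mul_nonneg (mul_nonneg (hP i k) (hβ k)) (inv_nonneg.mpr (hNtil k))) (hP j k)

lemma contDiff_Gfield {k : WithTop ℕ∞} : ContDiff ℝ k (Gfield P β b d γ) := by
  refine contDiff_pi.mpr fun i => ?_
  simp only [Gfield, Matrix.mulVec, dotProduct]
  fun_prop

lemma Gfield_nonneg_of_eq_zero (hP : ∀ i j, 0 ≤ P i j) (hβ : ∀ j, 0 ≤ β j)
    (hN : 0 ≤ Nbar b d) {I : Fin n → ℝ} (hI : 0 ≤ I) {i : Fin n} (hi : I i = 0) :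
    0 ≤ Gfield P β b d γ I i := by
  have hMI : 0 ≤ (Mmat P β b d *ᵥ I) i :=
    dotProduct_nonneg_of_nonneg (fun j => Mmat_nonneg hP hβ hN i j) hI
  simpa [Gfield, hi] using mul_nonneg (hN i) hMI

lemma Gfield_nonpos_of_eq_Nbar (hdγ : ∀ i, 0 ≤ d i + γ i) (hN : 0 ≤ Nbar b d)
    {I : Fin n → ℝ} {i : Fin n} (hi : I i = Nbar b d i) :
    Gfield P β b d γ I i ≤ 0 := by
  simpa [Gfield, hi] using mul_nonneg (hdγ i) (hN i)

end SIS

theorem sis_omega_positively_invariant_general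
    {n : ℕ} (b d γ β : Fin n → ℝ) (P : Matrix (Fin n) (Fin n) ℝ)
    (hb : ∀ i, 0 < b i) (hd : ∀ i, 0 < d i) (hγ : ∀ i, 0 ≤ γ i) (hβ : ∀ j, 0 < β j)
    (hP0 : ∀ i j, 0 ≤ P i j) :
    ∀ I : ℝ → Fin n → ℝ, IsSol P β b d γ I → I 0 ∈ OmegaSet b d →
      ∀ t ≥ (0 : ℝ), I t ∈ OmegaSet b d := by
  intro I hI hI0 t ht
  have hN : 0 ≤ Nbar b d := fun i => div_nonneg (hb i).le (hd i).le
  have hβ' : ∀ j, 0 ≤ β j := fun j => (hβ j).le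
  have hdγ : ∀ i, 0 ≤ d i + γ i := fun i => add_nonneg (hd i).le (hγ i)
  rw [OmegaSet_eq_Icc] at hI0 ⊢
  refine mem_Icc_of_hasDerivWithinAt (contDiff_Gfield (k := 1)).locallyLipschitz
    (fun y hy i hi => Gfield_nonneg_of_eq_zero hP0 hβ' hN hy.1 hi)
    (fun y _ i hi => Gfield_nonpos_of_eq_Nbar hdγ hN hi)
    (fun s hs => (hI s hs.1).continuousWithinAt.mono Icc_subset_Ici_self)
    (fun s hs => (hI s hs.1).mono (Ici_subset_Ici.mpr hs.1)) hI0 t ⟨ht, le_rfl⟩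

/-- the compact set Ω is positively invariant for the SIS system. -/
theorem sis_omega_positively_invariant
    {n : ℕ} (hn : 1 ≤ n) (b d γ β : Fin n → ℝ) (P : Matrix (Fin n) (Fin n) ℝ)
    (hb : ∀ i, 0 < b i) (hd : ∀ i, 0 < d i) (hγ : ∀ i, 0 ≤ γ i) (hβ : ∀ j, 0 < β j)
    (hP0 : ∀ i j, 0 ≤ P i j) (hP1 : ∀ i j, P i j ≤ 1)
    (hrow : ∀ i, ∑ j, P i j = 1) (hcol : ∀ j, ∃ k, 0 < P k j) :
    ∀ I : ℝ → Fin n → ℝ, IsSol P β b d γ I → I 0 ∈ OmegaSet b d →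
      ∀ t ≥ (0 : ℝ), I t ∈ OmegaSet b d :=
  sis_omega_positively_invariant_general b d γ β P hb hd hγ hβ hP0
end
end
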